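/- arXiv:quant-ph/0406063 — 3 statements merged into one kernel-verified Lean document; each statement's English description precedes it below -/
import Mathlib

section
/- Let P be the projector of an ((n,K))_D quantum code and define A_S'(P) = K^{−2} tr_S[(tr_{S'}P)²] and B_S'(P) = K^{−1} tr_{S'}[(tr_S P)²]. Then for all S ⊆ {1,…,n}: B_S'(P) ≥ A_S'(P) > 0, with equality B_S' = A_S' for all S when K = 1. -/
open Matrix

noncomputable section

/-- Interleave a configuration on the qudits in `S` with one on the complement. -/
def glue {n : ℕ} {α : Type*} (S : Finset (Fin n)) (u : {i // i ∈ S} → α)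
    (v : {i // i ∉ S} → α) : Fin n → α :=
  fun i => if h : i ∈ S then u ⟨i, h⟩ else v ⟨i, h⟩

/-- Partial trace over the qudits indexed by `S` of an operator on `(ℂ^α)^{⊗n}`. -/
def ptr {n : ℕ} {α : Type*} [Fintype α] (S : Finset (Fin n))
    (M : Matrix (Fin n → α) (Fin n → α) ℂ) :
    Matrix ({i // i ∉ S} → α) ({i // i ∉ S} → α) ℂ :=
  fun v w => ∑ u : {i : Fin n // i ∈ S} → α, M (glue S u v) (glue S u w)

/-- Rains enumerator `A_S'(P) = K⁻² tr_S[(tr_{S'}P)²]` (a real quantity). -/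
def Arains {n D : ℕ} (K : ℕ) (S : Finset (Fin n))
    (P : Matrix (Fin n → Fin D) (Fin n → Fin D) ℂ) : ℝ :=
  (1 / (K : ℝ) ^ 2) * ((ptr Sᶜ P * ptr Sᶜ P).trace).re

/-- Rains enumerator `B_S'(P) = K⁻¹ tr_{S'}[(tr_S P)²]` (a real quantity). -/
def Brains {n D : ℕ} (K : ℕ) (S : Finset (Fin n))
    (P : Matrix (Fin n → Fin D) (Fin n → Fin D) ℂ) : ℝ :=
  (1 / (K : ℝ)) * ((ptr S P * ptr S P).trace).re

namespace Stmt8Aux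

local notation "conj'" => starRingEnd ℂ

lemma normSq_sum_le {κ : Type*} [Fintype κ] (z : κ → ℂ) :
    Complex.normSq (∑ k, z k) ≤ (Fintype.card κ : ℝ) * ∑ k, Complex.normSq (z k) := by
  have h0 : ‖∑ k, z k‖ ≤ ∑ k, ‖z k‖ := by
    simpa using norm_sum_le (Finset.univ) z
  calc Complex.normSq (∑ k, z k) = ‖∑ k, z k‖ ^ 2 := (Complex.sq_norm _).symm
    _ ≤ (∑ k, ‖z k‖) ^ 2 := by
        apply pow_le_pow_left₀ (norm_nonneg _) h0
    _ ≤ (Fintype.card κ : ℝ) * ∑ k, ‖z k‖ ^ 2 := by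
        simpa using sq_sum_le_card_mul_sum_sq (s := Finset.univ)
          (f := fun k => ‖z k‖)
    _ = (Fintype.card κ : ℝ) * ∑ k, Complex.normSq (z k) := by
        congr 1; exact Finset.sum_congr rfl fun k _ => Complex.sq_norm _

universe u

lemma exists_decomp {ι : Type u} [Fintype ι] [DecidableEq ι] (K : ℕ)
    (P : Matrix ι ι ℂ) (hh : P.IsHermitian) (hi : P * P = P) (htr : P.trace = K) :
    ∃ (κ : Type u) (_ : Fintype κ) (ψ : κ → ι → ℂ), Fintype.card κ = K ∧
      ∀ x y, P x y = ∑ k, ψ k x * (starRingEnd ℂ) (ψ k y) := by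
  classical
  set μ := hh.eigenvalues with hμdef
  set Umat : Matrix ι ι ℂ := (hh.eigenvectorUnitary : Matrix ι ι ℂ) with hUdef
  have hev : ∀ i, μ i = 0 ∨ μ i = 1 := by
    intro i
    have hv := hh.mulVec_eigenvectorBasis i
    have h2 : P *ᵥ (P *ᵥ ⇑(hh.eigenvectorBasis i)) = P *ᵥ ⇑(hh.eigenvectorBasis i) := by
      rw [Matrix.mulVec_mulVec, hi]
    rw [hv, Matrix.mulVec_smul, hv, smul_smul] at h2
    have hvne : ⇑(hh.eigenvectorBasis i) ≠ 0 := by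
      intro h
      apply hh.eigenvectorBasis.orthonormal.ne_zero i
      ext x
      exact congrFun h x
    have h3 : ((μ i * μ i) - μ i) • ⇑(hh.eigenvectorBasis i) = 0 := by
      rw [sub_smul, h2, sub_self]
    rcases smul_eq_zero.mp h3 with h | h
    · have : μ i * (μ i - 1) = 0 := by ring_nf; ring_nf at h; linarith
      rcases mul_eq_zero.mp this with h' | h'
      · exact Or.inl h'
      · exact Or.inr (by linarith)
    · exact absurd h hvne
  have htr2 : ∑ i, μ i = (K : ℝ) := by
    have h1 : P.trace = ∑ i, (μ i : ℂ) := by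
      conv_lhs => rw [hh.spectral_theorem, Unitary.conjStarAlgAut_apply]
      rw [Matrix.trace_mul_cycle]
      rw [(Matrix.mem_unitaryGroup_iff'.mp hh.eigenvectorUnitary.2)]
      rw [Matrix.one_mul, Matrix.trace_diagonal]
      rfl
    have h2 : ((∑ i, μ i : ℝ) : ℂ) = ((K : ℝ) : ℂ) := by
      push_cast
      rw [← h1, htr]
    exact_mod_cast h2
  refine ⟨{i : ι // μ i = 1}, inferInstance, fun k x => Umat x k.1, ?_, ?_⟩
  · have hcount : ∑ i, μ i = ((Finset.univ.filter (fun i => μ i = 1)).card : ℝ) := by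
      rw [Finset.card_filter]
      push_cast
      apply Finset.sum_congr rfl
      intro i _
      rcases hev i with h | h <;> simp [h]
    have : ((Finset.univ.filter (fun i => μ i = 1)).card : ℝ) = (K : ℝ) := by
      rw [← hcount, htr2]
    have hcard : (Finset.univ.filter (fun i => μ i = 1)).card = K := by exact_mod_cast this
    rw [Fintype.card_subtype]
    exact hcard
  · intro x y
    have h1 : P x y = ∑ i, (μ i : ℂ) * (Umat x i * (starRingEnd ℂ) (Umat y i)) := by
      conv_lhs => rw [hh.spectral_theorem, Unitary.conjStarAlgAut_apply]
      rw [Matrix.mul_apply]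
      apply Finset.sum_congr rfl
      intro i _
      rw [Matrix.mul_diagonal]
      simp [Umat, Matrix.star_eq_conjTranspose, Matrix.conjTranspose_apply]
      ring
    rw [h1]
    rw [← Finset.sum_filter_of_ne (p := fun i => μ i = 1)
      (f := fun i => (μ i : ℂ) * (Umat x i * (starRingEnd ℂ) (Umat y i)))]
    · rw [Finset.sum_subtype (Finset.univ.filter (fun i => μ i = 1))
        (p := fun i => μ i = 1) (by simp)
        (fun i => (μ i : ℂ) * (Umat x i * (starRingEnd ℂ) (Umat y i)))]
      apply Finset.sum_congr rfl
      intro k _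
      rw [k.2]
      simp
    · intro i _ hne
      rcases hev i with h | h
      · exfalso; apply hne; rw [h] at hne ⊢; simp at hne
      · exact h

lemma sum_comm6 {A B C D E F' : Type*} [Fintype A] [Fintype B] [Fintype C] [Fintype D]
    [Fintype E] [Fintype F'] (G : A → B → C → D → E → F' → ℂ) :
    ∑ a, ∑ b, ∑ c, ∑ d, ∑ e, ∑ f, G a b c d e f
    = ∑ c, ∑ d, ∑ e, ∑ f, ∑ a, ∑ b, G a b c d e f := by
  simp only [← Fintype.sum_prod_type']
  exact Fintype.sum_equiv
    ⟨fun x => ⟨x.2.2.1, x.2.2.2.1, x.2.2.2.2.1, x.2.2.2.2.2, x.1, x.2.1⟩,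
     fun y => ⟨y.2.2.2.2.1, y.2.2.2.2.2, y.1, y.2.1, y.2.2.1, y.2.2.2.1⟩,
     fun _ => rfl, fun _ => rfl⟩ _ _ (fun _ => rfl)

lemma key_sum {κ U V : Type*} [Fintype κ] [Fintype U] [Fintype V] (F : κ → U → V → ℂ) :
    ∑ v : V, ∑ w : V,
      (∑ u : U, ∑ k : κ, F k u v * conj' (F k u w)) *
      (∑ u' : U, ∑ m : κ, F m u' w * conj' (F m u' v))
    = ∑ u : U, ∑ u' : U, ∑ k : κ, ∑ m : κ,
        ((Complex.normSq (∑ v : V, conj' (F k u v) * F m u' v) : ℝ) : ℂ) := by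
  have hR : ∀ (k m : κ) (u u' : U),
      ((Complex.normSq (∑ v : V, conj' (F k u v) * F m u' v) : ℝ) : ℂ)
      = ∑ v : V, ∑ w : V, (F k u v * conj' (F m u' v)) * (conj' (F k u w) * F m u' w) := by
    intro k m u u'
    rw [← Complex.normSq_conj, Complex.normSq_eq_conj_mul_self, Complex.conj_conj]
    rw [map_sum]
    simp only [_root_.map_mul, Complex.conj_conj]
    rw [Finset.sum_mul_sum]
    rw [Finset.sum_comm]
    refine Finset.sum_congr rfl fun v _ => Finset.sum_congr rfl fun w _ => ?_
    ring
  simp only [hR]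
  simp only [Finset.sum_mul_sum]
  rw [sum_comm6 (fun v w u u' k m =>
    F k u v * conj' (F k u w) * (F m u' w * conj' (F m u' v)))]
  refine Finset.sum_congr rfl fun u _ => Finset.sum_congr rfl fun u' _ =>
    Finset.sum_congr rfl fun k _ => Finset.sum_congr rfl fun m _ =>
    Finset.sum_congr rfl fun v _ => Finset.sum_congr rfl fun w _ => ?_
  ring

variable {n D : ℕ} (S : Finset (Fin n))

/-- Reindexing of the `Sᶜ`-summed coordinates. -/
def eqVc : ({i : Fin n // i ∈ Sᶜ} → Fin D) ≃ ({i : Fin n // i ∉ S} → Fin D) where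
  toFun t := fun v => t ⟨v.1, Finset.mem_compl.mpr v.2⟩
  invFun t := fun v => t ⟨v.1, Finset.mem_compl.mp v.2⟩
  left_inv t := rfl
  right_inv t := rfl

/-- Reindexing of the kept coordinates for `ptr Sᶜ`. -/
def eqUc : ({i : Fin n // i ∉ Sᶜ} → Fin D) ≃ ({i : Fin n // i ∈ S} → Fin D) where
  toFun t := fun v => t ⟨v.1, by simp [Finset.mem_compl, v.2]⟩
  invFun t := fun v => t ⟨v.1, by
    have := v.2; simp [Finset.mem_compl] at this; exact this⟩
  left_inv t := rfl
  right_inv t := rfl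

lemma glue_compl (t : {i : Fin n // i ∈ Sᶜ} → Fin D) (s : {i : Fin n // i ∉ Sᶜ} → Fin D) :
    glue Sᶜ t s = glue S (eqUc S s) (eqVc S t) := by
  funext i
  unfold glue
  by_cases h : i ∈ S
  · rw [dif_neg (by simp [Finset.mem_compl, h]), dif_pos h]
    rfl
  · rw [dif_pos (Finset.mem_compl.mpr h), dif_neg h]
    rfl

/-- `glue` as an equivalence. -/
def prodGlue : (({i : Fin n // i ∈ S} → Fin D) × ({i : Fin n // i ∉ S} → Fin D))
    ≃ (Fin n → Fin D) where
  toFun p := glue S p.1 p.2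
  invFun f := (fun u => f u.1, fun v => f v.1)
  left_inv p := by
    refine Prod.ext ?_ ?_
    · funext u
      show glue S p.1 p.2 u.1 = p.1 u
      unfold glue
      rw [dif_pos u.2]
    · funext v
      show glue S p.1 p.2 v.1 = p.2 v
      unfold glue
      rw [dif_neg v.2]
  right_inv f := by
    funext i
    show (if h : i ∈ S then f i else f i) = f i
    split <;> rfl

end Stmt8Aux

set_option maxHeartbeats 1000000 in
/-- For the projector `P` of an `((n,K))_D` code:
`B_S'(P) ≥ A_S'(P) > 0` for every `S`, with equality `B_S' = A_S'` when `K = 1`. -/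
theorem stmt_8 (n D K : ℕ) (hD : 2 ≤ D) (hK : 1 ≤ K)
    (P : Matrix (Fin n → Fin D) (Fin n → Fin D) ℂ)
    (hPherm : P.IsHermitian) (hPidem : P * P = P) (hPtr : P.trace = (K : ℂ)) :
    ∀ S : Finset (Fin n),
      (0 < Arains K S P ∧ Arains K S P ≤ Brains K S P) ∧
      (K = 1 → Arains K S P = Brains K S P) := by
  classical
  intro S
  obtain ⟨κ, hκfin, ψ, hcard, hdec⟩ :=
    Stmt8Aux.exists_decomp K P hPherm hPidem hPtr
  set V := ({i : Fin n // i ∉ S} → Fin D) with hV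
  set Uty := ({i : Fin n // i ∈ S} → Fin D) with hUty
  set e : κ → κ → Uty → Uty → ℂ :=
    fun k m u u' => ∑ v : V, (starRingEnd ℂ) (ψ k (glue S u v)) * ψ m (glue S u' v) with he
  -- B-side computation
  have hB : (ptr S P * ptr S P).trace
      = ((∑ u : Uty, ∑ u' : Uty, ∑ k, ∑ m, Complex.normSq (e k m u u') : ℝ) : ℂ) := by
    have h1 : (ptr S P * ptr S P).trace = ∑ v : V, ∑ w : V, ptr S P v w * ptr S P w v := by
      rw [Matrix.trace]
      exact Finset.sum_congr rfl fun v _ => by rw [Matrix.diag_apply, Matrix.mul_apply]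
    rw [h1]
    have h2 : ∀ v w : V, ptr S P v w
        = ∑ u : Uty, ∑ k, ψ k (glue S u v) * (starRingEnd ℂ) (ψ k (glue S u w)) := by
      intro v w
      exact Finset.sum_congr rfl fun u _ => hdec _ _
    simp only [h2]
    rw [Stmt8Aux.key_sum (fun k u v => ψ k (glue S u v))]
    push_cast
    rfl
  -- A-side: entries of `ptr Sᶜ P`
  have hXentry : ∀ s s' : ({i : Fin n // i ∉ Sᶜ} → Fin D),
      ptr Sᶜ P s s' = (starRingEnd ℂ)
        (∑ k, e k k (Stmt8Aux.eqUc S s) (Stmt8Aux.eqUc S s')) := by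
    intro s s'
    have h1 : ptr Sᶜ P s s'
        = ∑ t : ({i : Fin n // i ∈ Sᶜ} → Fin D),
            P (glue S (Stmt8Aux.eqUc S s) (Stmt8Aux.eqVc S t))
              (glue S (Stmt8Aux.eqUc S s') (Stmt8Aux.eqVc S t)) := by
      exact Finset.sum_congr rfl fun t _ => by
        rw [Stmt8Aux.glue_compl S t s, Stmt8Aux.glue_compl S t s']
    rw [h1]
    rw [Fintype.sum_equiv (Stmt8Aux.eqVc S)
      (fun t => P (glue S (Stmt8Aux.eqUc S s) (Stmt8Aux.eqVc S t))
              (glue S (Stmt8Aux.eqUc S s') (Stmt8Aux.eqVc S t)))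
      (fun v => P (glue S (Stmt8Aux.eqUc S s) v) (glue S (Stmt8Aux.eqUc S s') v))
      (fun t => rfl)]
    calc ∑ v : V, P (glue S (Stmt8Aux.eqUc S s) v) (glue S (Stmt8Aux.eqUc S s') v)
        = ∑ v : V, ∑ k, ψ k (glue S (Stmt8Aux.eqUc S s) v) *
            (starRingEnd ℂ) (ψ k (glue S (Stmt8Aux.eqUc S s') v)) :=
          Finset.sum_congr rfl fun v _ => hdec _ _
      _ = ∑ k, ∑ v : V, ψ k (glue S (Stmt8Aux.eqUc S s) v) *
            (starRingEnd ℂ) (ψ k (glue S (Stmt8Aux.eqUc S s') v)) := Finset.sum_comm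
      _ = (starRingEnd ℂ) (∑ k, e k k (Stmt8Aux.eqUc S s) (Stmt8Aux.eqUc S s')) := by
          rw [map_sum]
          refine Finset.sum_congr rfl fun k _ => ?_
          rw [he]
          simp only [map_sum, _root_.map_mul, Complex.conj_conj]
  -- conjugation symmetry of the diagonal part
  have hesymm : ∀ (u u' : Uty), (∑ k, e k k u' u) = (starRingEnd ℂ) (∑ k, e k k u u') := by
    intro u u'
    rw [map_sum]
    refine Finset.sum_congr rfl fun k _ => ?_
    rw [he]
    simp only [map_sum, _root_.map_mul, Complex.conj_conj]
    exact Finset.sum_congr rfl fun v _ => by ring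
  -- A-side computation
  have hA : (ptr Sᶜ P * ptr Sᶜ P).trace
      = ((∑ u : Uty, ∑ u' : Uty, Complex.normSq (∑ k, e k k u u') : ℝ) : ℂ) := by
    have h1 : (ptr Sᶜ P * ptr Sᶜ P).trace
        = ∑ s, ∑ s', ptr Sᶜ P s s' * ptr Sᶜ P s' s := by
      rw [Matrix.trace]
      exact Finset.sum_congr rfl fun v _ => by rw [Matrix.diag_apply, Matrix.mul_apply]
    rw [h1]
    have h2 : ∀ s s' : ({i : Fin n // i ∉ Sᶜ} → Fin D),
        ptr Sᶜ P s s' * ptr Sᶜ P s' s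
        = ((Complex.normSq (∑ k, e k k (Stmt8Aux.eqUc S s) (Stmt8Aux.eqUc S s')) : ℝ) : ℂ) := by
      intro s s'
      rw [hXentry s s', hXentry s' s,
        hesymm (Stmt8Aux.eqUc S s) (Stmt8Aux.eqUc S s'), Complex.conj_conj,
        Complex.normSq_eq_conj_mul_self]
    simp only [h2]
    push_cast
    refine Fintype.sum_equiv (Stmt8Aux.eqUc S) _ _ (fun s => ?_)
    exact Fintype.sum_equiv (Stmt8Aux.eqUc S) _ _ (fun s' => rfl)
  -- trace of P through the decomposition
  have htrP : ∑ u : Uty, ∑ k, e k k u u = (K : ℂ) := by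
    have h1 : (K : ℂ) = ∑ x, P x x := by rw [← hPtr]; rfl
    rw [h1, ← Equiv.sum_comp (Stmt8Aux.prodGlue S) (fun x => P x x),
      Fintype.sum_prod_type]
    refine Finset.sum_congr rfl fun u _ => ?_
    rw [Finset.sum_comm]
    refine Finset.sum_congr rfl fun v _ => ?_
    rw [hdec]
    exact Finset.sum_congr rfl fun k _ => mul_comm _ _
  -- real quantities
  set L : ℝ := ∑ u : Uty, ∑ u' : Uty, Complex.normSq (∑ k, e k k u u') with hL
  set R : ℝ := ∑ u : Uty, ∑ u' : Uty, ∑ k, ∑ m, Complex.normSq (e k m u u') with hR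
  have hAval : Arains K S P = (1 / (K : ℝ) ^ 2) * L := by
    unfold Arains; rw [hA, Complex.ofReal_re]
  have hBval : Brains K S P = (1 / (K : ℝ)) * R := by
    unfold Brains; rw [hB, Complex.ofReal_re]
  have hKpos : (0 : ℝ) < K := by exact_mod_cast hK
  -- positivity of L
  have hLnonneg : ∀ u u' : Uty, (0:ℝ) ≤ Complex.normSq (∑ k, e k k u u') :=
    fun u u' => Complex.normSq_nonneg _
  have hLpos : 0 < L := by
    rcases lt_or_eq_of_le (Finset.sum_nonneg fun u _ =>
      Finset.sum_nonneg fun u' _ => hLnonneg u u') with h | h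
    · exact h
    · exfalso
      have hz : ∀ u : Uty, (∑ k, e k k u u) = 0 := by
        intro u
        have h1 : ∀ u u' : Uty, Complex.normSq (∑ k, e k k u u') = 0 := by
          intro u u'
          have h2 := (Finset.sum_eq_zero_iff_of_nonneg (fun u _ =>
            Finset.sum_nonneg fun u' _ => hLnonneg u u')).mp h.symm u (Finset.mem_univ u)
          exact (Finset.sum_eq_zero_iff_of_nonneg (fun u' _ =>
            hLnonneg u u')).mp h2 u' (Finset.mem_univ u')
        exact Complex.normSq_eq_zero.mp (h1 u u)
      have : (K : ℂ) = 0 := by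
        rw [← htrP]
        exact Finset.sum_eq_zero fun u _ => hz u
      have : (K : ℝ) = 0 := by exact_mod_cast this
      linarith
  -- the key inequality L ≤ K * R
  have hLR : L ≤ (K : ℝ) * R := by
    have h1 : ∀ u u' : Uty, Complex.normSq (∑ k, e k k u u')
        ≤ (K : ℝ) * ∑ k, ∑ m, Complex.normSq (e k m u u') := by
      intro u u'
      calc Complex.normSq (∑ k, e k k u u')
          ≤ (Fintype.card κ : ℝ) * ∑ k, Complex.normSq (e k k u u') :=
            Stmt8Aux.normSq_sum_le _
        _ = (K : ℝ) * ∑ k, Complex.normSq (e k k u u') := by rw [hcard]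
        _ ≤ (K : ℝ) * ∑ k, ∑ m, Complex.normSq (e k m u u') := by
            refine mul_le_mul_of_nonneg_left ?_ (le_of_lt hKpos)
            refine Finset.sum_le_sum fun k _ => ?_
            exact Finset.single_le_sum (f := fun m => Complex.normSq (e k m u u'))
              (fun m _ => Complex.normSq_nonneg _) (Finset.mem_univ k)
    calc L ≤ ∑ u : Uty, ∑ u' : Uty, (K:ℝ) * ∑ k, ∑ m, Complex.normSq (e k m u u') := by
          refine Finset.sum_le_sum fun u _ => Finset.sum_le_sum fun u' _ => h1 u u'
      _ = (K : ℝ) * R := by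
          rw [hR, Finset.mul_sum]
          exact Finset.sum_congr rfl fun u _ => by rw [Finset.mul_sum]
  refine ⟨⟨?_, ?_⟩, ?_⟩
  · rw [hAval]
    positivity
  · rw [hAval, hBval]
    have h2 : (1 / (K : ℝ) ^ 2) * L ≤ (1 / (K : ℝ) ^ 2) * ((K:ℝ) * R) := by
      refine mul_le_mul_of_nonneg_left hLR (by positivity)
    calc (1 / (K : ℝ) ^ 2) * L ≤ (1 / (K : ℝ) ^ 2) * ((K:ℝ) * R) := h2
      _ = (1 / (K : ℝ)) * R := by field_simp
  · intro hK1
    subst hK1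
    have hone : Fintype.card κ = 1 := hcard
    obtain ⟨k₀, hk₀⟩ := Fintype.card_eq_one_iff.mp hone
    haveI : Unique κ := ⟨⟨k₀⟩, hk₀⟩
    have hLReq : L = R := by
      rw [hL, hR]
      refine Finset.sum_congr rfl fun u _ => Finset.sum_congr rfl fun u' _ => ?_
      rw [Fintype.sum_unique (fun k => e k k u u'),
        Fintype.sum_unique (fun k => ∑ m, Complex.normSq (e k m u u')),
        Fintype.sum_unique (fun m => Complex.normSq (e default m u u'))]
    rw [hAval, hBval, hLReq]
    norm_num

end
end

section
/- Let P be the projector of an ((n,K))_D code, Q its range, and Υ_S a random depolarizing error acting on qudits S (i.e., E[Υ_S† A Υ_S] = D^{−|S|} I_S ⊗ tr_S(A) for all A). Then the transmission rate under error detection satisfies E_{Υ_S} E_{ψ∈Q}[⟨ψ|Υ_S† P Υ_S|ψ⟩] = D^{−|S|} K^{−1} tr_{S'}[(tr_S P)²] = D^{−|S|} B_S'(P). -/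
open Matrix MeasureTheory

noncomputable section

/-- `I_S ⊗ tr_S(A)`: identity on the qudits in `S` tensored with the partial trace
of `A` over the qudits in `S`. -/
def idTensorPtr {n D : ℕ} (S : Finset (Fin n))
    (A : Matrix (Fin n → Fin D) (Fin n → Fin D) ℂ) :
    Matrix (Fin n → Fin D) (Fin n → Fin D) ℂ :=
  fun f g =>
    if (fun i : {i // i ∈ S} => f i) = (fun i : {i // i ∈ S} => g i) then
      ptr S A (fun i : {i // i ∉ S} => f i) (fun i : {i // i ∉ S} => g i)
    else 0

lemma glue_in {n : ℕ} {α : Type*} (S : Finset (Fin n)) (u : {i // i ∈ S} → α)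
    (v : {i // i ∉ S} → α) (i : {i // i ∈ S}) : glue S u v i = u i := by
  simp [glue, i.2]

lemma glue_out {n : ℕ} {α : Type*} (S : Finset (Fin n)) (u : {i // i ∈ S} → α)
    (v : {i // i ∉ S} → α) (i : {i // i ∉ S}) : glue S u v i = v i := by
  simp [glue, i.2]

lemma glue_restrict {n : ℕ} {α : Type*} (S : Finset (Fin n)) (f : Fin n → α) :
    glue S (fun i : {i // i ∈ S} => f i) (fun i : {i // i ∉ S} => f i) = f := by
  funext i
  by_cases h : i ∈ S <;> simp [glue, h]

/-- splitting equivalence -/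
def splitEquiv {n : ℕ} (α : Type*) (S : Finset (Fin n)) :
    (Fin n → α) ≃ ({i // i ∈ S} → α) × ({i // i ∉ S} → α) where
  toFun f := (fun i => f i, fun i => f i)
  invFun p := glue S p.1 p.2
  left_inv f := glue_restrict S f
  right_inv p := by
    ext i
    · exact glue_in S p.1 p.2 i
    · exact glue_out S p.1 p.2 i

lemma trace_idTensorPtr_mul {n D : ℕ} (S : Finset (Fin n))
    (A B : Matrix (Fin n → Fin D) (Fin n → Fin D) ℂ) :
    (idTensorPtr S A * B).trace = (ptr S A * ptr S B).trace := by
  classical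
  have h1 : (idTensorPtr S A * B).trace
      = ∑ f : Fin n → Fin D, ∑ g : Fin n → Fin D, idTensorPtr S A f g * B g f := by
    simp [Matrix.trace, Matrix.diag, Matrix.mul_apply]
  rw [h1]
  have h2 : ∑ f : Fin n → Fin D, ∑ g : Fin n → Fin D, idTensorPtr S A f g * B g f
      = ∑ u, ∑ v, ∑ u', ∑ w, idTensorPtr S A ((splitEquiv (Fin D) S).symm (u, v))
        ((splitEquiv (Fin D) S).symm (u', w))
        * B ((splitEquiv (Fin D) S).symm (u', w)) ((splitEquiv (Fin D) S).symm (u, v)) := by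
    rw [← Equiv.sum_comp (splitEquiv (Fin D) S).symm, Fintype.sum_prod_type]
    refine Finset.sum_congr rfl fun u _ => Finset.sum_congr rfl fun v _ => ?_
    rw [← Equiv.sum_comp (splitEquiv (Fin D) S).symm, Fintype.sum_prod_type]
  rw [h2]
  have key : ∀ (u : {i // i ∈ S} → Fin D) (v : {i // i ∉ S} → Fin D)
      (u' : {i // i ∈ S} → Fin D) (w : {i // i ∉ S} → Fin D),
      idTensorPtr S A ((splitEquiv (Fin D) S).symm (u, v)) ((splitEquiv (Fin D) S).symm (u', w))
        = if u = u' then ptr S A v w else 0 := by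
    intro u v u' w
    simp only [splitEquiv, Equiv.coe_fn_symm_mk, idTensorPtr]
    have e1 : (fun i : {i // i ∈ S} => glue S u v i) = u := funext (glue_in S u v)
    have e1' : (fun i : {i // i ∈ S} => glue S u' w i) = u' := funext (glue_in S u' w)
    have e2 : (fun i : {i // i ∉ S} => glue S u v i) = v := funext (glue_out S u v)
    have e2' : (fun i : {i // i ∉ S} => glue S u' w i) = w := funext (glue_out S u' w)
    simp only [e1, e1', e2, e2']
  calc ∑ u, ∑ v, ∑ u', ∑ w, idTensorPtr S A ((splitEquiv (Fin D) S).symm (u, v))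
        ((splitEquiv (Fin D) S).symm (u', w))
        * B ((splitEquiv (Fin D) S).symm (u', w)) ((splitEquiv (Fin D) S).symm (u, v))
      = ∑ u, ∑ v, ∑ w, ptr S A v w * B (glue S u w) (glue S u v) := by
        refine Finset.sum_congr rfl fun u _ => Finset.sum_congr rfl fun v _ => ?_
        rw [Finset.sum_comm]
        refine Finset.sum_congr rfl fun w _ => ?_
        rw [Finset.sum_eq_single u]
        · rw [key]; simp [splitEquiv]
        · intro u' _ hne
          rw [key]; simp [hne.symm]
        · intro h; exact absurd (Finset.mem_univ u) h
    _ = ∑ v, ∑ w, ptr S A v w * ptr S B w v := by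
        rw [Finset.sum_comm]
        refine Finset.sum_congr rfl fun v _ => ?_
        rw [Finset.sum_comm]
        refine Finset.sum_congr rfl fun w _ => ?_
        have hB : ptr S B w v = ∑ u, B (glue S u w) (glue S u v) := rfl
        rw [hB, Finset.mul_sum]
    _ = (ptr S A * ptr S B).trace := by
        simp [Matrix.trace, Matrix.diag, Matrix.mul_apply]

lemma avg_lemma {ι : Type*} [Fintype ι] [DecidableEq ι] (K : ℕ) (hK : 1 ≤ K)
    (Q : Submodule ℂ (ι → ℂ)) (hQK : Module.finrank ℂ Q = K)
    (P : Matrix ι ι ℂ) (hPherm : P.IsHermitian) (hPidem : P * P = P)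
    (hPrange : ∀ v, v ∈ Q ↔ P.mulVec v = v)
    (μ : Measure (ι → ℂ)) [IsProbabilityMeasure μ]
    (hsupp : ∀ᵐ ψ ∂μ, ψ ∈ Q ∧ star ψ ⬝ᵥ ψ = 1)
    (hinv : ∀ U : Matrix ι ι ℂ, U ∈ Matrix.unitaryGroup ι ℂ →
      (∀ v ∈ Q, U.mulVec v ∈ Q) → μ.map U.mulVec = μ) :
    (Matrix.of fun g f => ∫ ψ, ψ g * (starRingEnd ℂ) (ψ f) ∂μ) = (K : ℂ)⁻¹ • P := by
  classical
  -- basic bounds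
  have hnorm1 : ∀ᵐ ψ ∂μ, ∀ f, ‖ψ f‖ ≤ 1 := by
    filter_upwards [hsupp] with ψ hψ f
    obtain ⟨-, h1⟩ := hψ
    have hsum : ∑ i, ((Complex.normSq (ψ i) : ℝ) : ℂ) = 1 := by
      rw [← h1]
      simp [dotProduct, Pi.star_apply, Complex.normSq_eq_conj_mul_self]
    have hsumR : ∑ i, Complex.normSq (ψ i) = 1 := by
      have := hsum
      rw [← Complex.ofReal_sum] at this
      exact_mod_cast this
    have hle : Complex.normSq (ψ f) ≤ 1 := by
      rw [← hsumR]
      exact Finset.single_le_sum (fun i _ => Complex.normSq_nonneg _) (Finset.mem_univ f)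
    have h2 : ‖ψ f‖ ^ 2 ≤ 1 := by
      rw [Complex.sq_norm]; exact hle
    nlinarith [norm_nonneg (ψ f)]
  have hmeas : ∀ f g : ι, Measurable fun ψ : ι → ℂ => ψ g * (starRingEnd ℂ) (ψ f) :=
    fun f g => (measurable_pi_apply g).mul (continuous_star.measurable.comp (measurable_pi_apply f))
  have hInt : ∀ f g : ι, Integrable (fun ψ : ι → ℂ => ψ g * (starRingEnd ℂ) (ψ f)) μ := by
    intro f g
    refine Integrable.mono' (integrable_const 1) ((hmeas f g).aestronglyMeasurable) ?_
    filter_upwards [hnorm1] with ψ h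
    calc ‖ψ g * (starRingEnd ℂ) (ψ f)‖ = ‖ψ g‖ * ‖ψ f‖ := by
          rw [norm_mul, RCLike.norm_conj]
      _ ≤ 1 * 1 := mul_le_mul (h g) (h f) (norm_nonneg _) zero_le_one
      _ = 1 := one_mul 1
  set M : Matrix ι ι ℂ := Matrix.of fun g f => ∫ ψ, ψ g * (starRingEnd ℂ) (ψ f) ∂μ with hM
  -- P M = M
  have hPM : P * M = M := by
    ext g f
    have h1 : (P * M) g f = ∫ ψ, ∑ h, P g h * (ψ h * (starRingEnd ℂ) (ψ f)) ∂μ := by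
      rw [integral_finset_sum _ (fun h _ => (hInt f h).const_mul _)]
      simp only [Matrix.mul_apply, hM, Matrix.of_apply]
      exact Finset.sum_congr rfl fun h _ => (integral_const_mul _ _).symm
    rw [h1]
    have h2 : ∀ ψ : ι → ℂ, ∑ h, P g h * (ψ h * (starRingEnd ℂ) (ψ f))
        = (P.mulVec ψ) g * (starRingEnd ℂ) (ψ f) := by
      intro ψ
      rw [Matrix.mulVec, dotProduct, Finset.sum_mul]
      exact Finset.sum_congr rfl fun h _ => (mul_assoc _ _ _).symm
    simp only [h2]
    refine integral_congr_ae ?_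
    filter_upwards [hsupp] with ψ hψ
    rw [(hPrange ψ).mp hψ.1]
  -- unitary invariance of M
  have hUMU : ∀ U : Matrix ι ι ℂ, U ∈ Matrix.unitaryGroup ι ℂ →
      (∀ v ∈ Q, U.mulVec v ∈ Q) → U * M * star U = M := by
    intro U hU hUQ
    have hUmeas : Measurable U.mulVec := by
      apply measurable_pi_lambda
      intro g
      simp only [Matrix.mulVec, dotProduct]
      exact Finset.measurable_sum _ (fun h _ => (measurable_pi_apply h).const_mul _)
    ext g f
    have hmap : M g f = ∫ ψ, (U.mulVec ψ) g * (starRingEnd ℂ) ((U.mulVec ψ) f) ∂μ := by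
      have : M g f = ∫ ψ, ψ g * (starRingEnd ℂ) (ψ f) ∂μ := rfl
      rw [this]
      conv_lhs => rw [← hinv U hU hUQ]
      rw [integral_map hUmeas.aemeasurable ((hmeas f g).aestronglyMeasurable)]
    have hpt : ∀ ψ : ι → ℂ, (U.mulVec ψ) g * (starRingEnd ℂ) ((U.mulVec ψ) f)
        = ∑ k, ∑ h, (U g h * (starRingEnd ℂ) (U f k)) * (ψ h * (starRingEnd ℂ) (ψ k)) := by
      intro ψ
      simp only [Matrix.mulVec, dotProduct, map_sum, _root_.map_mul, Finset.sum_mul,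
        Finset.mul_sum]
      refine Finset.sum_congr rfl fun k _ => Finset.sum_congr rfl fun h _ => by ring
    have key : M g f = ∑ k, ∑ h, (U g h * (starRingEnd ℂ) (U f k)) * M h k := by
      rw [hmap]
      simp only [hpt]
      rw [integral_finset_sum _
        (fun k _ => integrable_finset_sum _ (fun h _ => (hInt k h).const_mul _))]
      refine Finset.sum_congr rfl fun k _ => ?_
      rw [integral_finset_sum _ (fun h _ => (hInt k h).const_mul _)]
      exact Finset.sum_congr rfl fun h _ => integral_const_mul _ _
    have lhs_eq : (U * M * star U) g f
        = ∑ k, ∑ h, (U g h * (starRingEnd ℂ) (U f k)) * M h k := by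
      simp only [Matrix.mul_apply, Matrix.star_apply, Finset.sum_mul]
      exact Finset.sum_congr rfl fun k _ => Finset.sum_congr rfl fun h _ => by
        simp [RCLike.star_def]; ring
    rw [lhs_eq, ← key]
  -- trace M = 1
  have htrM : M.trace = 1 := by
    have h1 : M.trace = ∫ ψ, ∑ g, ψ g * (starRingEnd ℂ) (ψ g) ∂μ := by
      rw [integral_finset_sum _ (fun g _ => hInt g g)]
      rfl
    rw [h1]
    have : ∫ ψ, ∑ g, ψ g * (starRingEnd ℂ) (ψ g) ∂μ = ∫ _ψ, (1 : ℂ) ∂μ := by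
      refine integral_congr_ae ?_
      filter_upwards [hsupp] with ψ hψ
      rw [← hψ.2]
      simp [dotProduct, Pi.star_apply, mul_comm]
    rw [this, integral_const]
    simp
  -- spectral decomposition
  set V : Matrix ι ι ℂ := (hPherm.eigenvectorUnitary : Matrix ι ι ℂ) with hVdef
  set d : ι → ℂ := (RCLike.ofReal ∘ hPherm.eigenvalues : ι → ℂ) with hddef
  have hVmem : V ∈ Matrix.unitaryGroup ι ℂ := hPherm.eigenvectorUnitary.2
  have hVsV : star V * V = 1 := Unitary.star_mul_self_of_mem hVmem
  have hVVs : V * star V = 1 := Unitary.mul_star_self_of_mem hVmem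
  have hdiag : star V * P * V = Matrix.diagonal d := by
    have h := hPherm.conjStarAlgAut_star_eigenvectorUnitary
    simp only [Unitary.conjStarAlgAut_apply, Unitary.coe_star, star_star] at h
    exact h
  have hPdecomp : P = V * Matrix.diagonal d * star V := by
    have h := hPherm.spectral_theorem
    rw [Unitary.conjStarAlgAut_apply] at h
    exact h
  have hd01 : ∀ i, d i = 0 ∨ d i = 1 := by
    have hDD : Matrix.diagonal d * Matrix.diagonal d = Matrix.diagonal d := by
      rw [← hdiag]
      calc star V * P * V * (star V * P * V)
          = star V * (P * (V * star V) * P) * V := by noncomm_ring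
        _ = star V * P * V := by rw [hVVs, Matrix.mul_one, hPidem]
    rw [Matrix.diagonal_mul_diagonal] at hDD
    intro i
    have h2 : d i * d i = d i := congrFun (Matrix.diagonal_injective hDD) i
    rcases mul_eq_zero.mp (show d i * (d i - 1) = 0 by ring_nf; linear_combination h2) with h | h
    · exact Or.inl h
    · exact Or.inr (by have := sub_eq_zero.mp h; linear_combination this)
  set M' : Matrix ι ι ℂ := star V * M * V with hM'def
  have hMrec : M = V * M' * star V := by
    rw [hM'def]
    calc M = (V * star V) * M * (V * star V) := by rw [hVVs]; noncomm_ring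
      _ = V * (star V * M * V) * star V := by noncomm_ring
  have hdM' : Matrix.diagonal d * M' = M' := by
    rw [hM'def, ← hdiag]
    calc star V * P * V * (star V * M * V)
        = star V * (P * (V * star V) * M) * V := by noncomm_ring
      _ = star V * (P * M) * V := by rw [hVVs, Matrix.mul_one]
      _ = star V * M * V := by rw [hPM]
  have hconj : ∀ W : Matrix ι ι ℂ, W ∈ Matrix.unitaryGroup ι ℂ →
      W * Matrix.diagonal d = Matrix.diagonal d * W → W * M' * star W = M' := by
    intro W hW hWd
    have hUmem : V * W * star V ∈ Matrix.unitaryGroup ι ℂ :=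
      mul_mem (mul_mem hVmem hW) (Unitary.star_mem hVmem)
    have hUP : (V * W * star V) * P = P * (V * W * star V) := by
      rw [hPdecomp]
      calc V * W * star V * (V * Matrix.diagonal d * star V)
          = V * (W * (star V * V) * Matrix.diagonal d) * star V := by noncomm_ring
        _ = V * (W * Matrix.diagonal d) * star V := by rw [hVsV, Matrix.mul_one]
        _ = V * (Matrix.diagonal d * W) * star V := by rw [hWd]
        _ = V * Matrix.diagonal d * ((star V * V) * W) * star V := by
            rw [hVsV]; noncomm_ring
        _ = V * Matrix.diagonal d * star V * (V * W * star V) := by noncomm_ring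
    have hUQ : ∀ v ∈ Q, (V * W * star V).mulVec v ∈ Q := by
      intro v hv
      rw [hPrange] at hv ⊢
      rw [Matrix.mulVec_mulVec, ← hUP, ← Matrix.mulVec_mulVec, hv]
    have hUM := hUMU _ hUmem hUQ
    have hstar : star (V * W * star V) = V * star W * star V := by
      simp only [StarMul.star_mul, star_star, Matrix.mul_assoc]
    have h2 := congrArg (fun X => star V * X * V) hUM
    simp only [hstar] at h2
    have e : star V * (V * W * star V * M * (V * star W * star V)) * V
        = W * (star V * M * V) * star W := by
      calc star V * (V * W * star V * M * (V * star W * star V)) * V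
          = (star V * V) * W * (star V * M * V) * star W * (star V * V) := by noncomm_ring
        _ = W * (star V * M * V) * star W := by rw [hVsV]; noncomm_ring
    rw [e] at h2
    rw [hM'def]
    exact h2
  -- off-diagonal entries vanish
  have hoff : ∀ a b : ι, a ≠ b → M' a b = 0 := by
    intro a b hab
    set w : ι → ℂ := fun x => if x = a then -1 else 1 with hw
    have hws : w * star w = 1 := by
      funext x
      by_cases hx : x = a <;> simp [hw, hx]
    have hWmem : Matrix.diagonal w ∈ Matrix.unitaryGroup ι ℂ := by
      rw [Matrix.mem_unitaryGroup_iff, Matrix.star_eq_conjTranspose,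
        Matrix.diagonal_conjTranspose, Matrix.diagonal_mul_diagonal]
      exact congrArg diagonal hws
    have hWd : Matrix.diagonal w * Matrix.diagonal d = Matrix.diagonal d * Matrix.diagonal w := by
      rw [Matrix.diagonal_mul_diagonal, Matrix.diagonal_mul_diagonal]
      exact congrArg Matrix.diagonal (mul_comm w d)
    have h := hconj (Matrix.diagonal w) hWmem hWd
    have h2 := congrFun (congrFun h a) b
    rw [Matrix.star_eq_conjTranspose, Matrix.diagonal_conjTranspose,
      Matrix.mul_diagonal, Matrix.diagonal_mul] at h2
    have hwa : w a = -1 := by simp [hw]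
    have hwb : (star w) b = 1 := by simp [hw, hab.symm, Pi.star_apply]
    rw [hwa, hwb, mul_one] at h2
    linear_combination (-1/2 : ℂ) * h2
  -- equal diagonal entries on the eigenvalue-one block
  have hswap : ∀ a b : ι, d a = d b → M' a a = M' b b := by
    intro a b hdab
    rcases eq_or_ne a b with rfl | hab
    · rfl
    set σ := Equiv.swap a b with hσ
    set W : Matrix ι ι ℂ := Matrix.of (fun x y => if y = σ x then 1 else 0) with hW
    have hWX : ∀ (X : Matrix ι ι ℂ) (x y : ι), (W * X) x y = X (σ x) y := by
      intro X x y
      rw [Matrix.mul_apply, Finset.sum_eq_single (σ x)]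
      · simp [hW]
      · intro c _ hc; simp [hW, hc]
      · intro hc; exact absurd (Finset.mem_univ _) hc
    have hXWs : ∀ (X : Matrix ι ι ℂ) (x y : ι), (X * star W) x y = X x (σ y) := by
      intro X x y
      rw [Matrix.mul_apply, Finset.sum_eq_single (σ y)]
      · have h1 : (star W) (σ y) y = 1 := by simp [Matrix.star_apply, hW]
        rw [h1, mul_one]
      · intro c _ hc
        have h0 : (star W) c y = 0 := by simp [Matrix.star_apply, hW, hc]
        rw [h0, mul_zero]
      · intro hc; exact absurd (Finset.mem_univ _) hc
    have hWmem : W ∈ Matrix.unitaryGroup ι ℂ := by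
      rw [Matrix.mem_unitaryGroup_iff]
      ext x y
      rw [hXWs]
      by_cases hxy : x = y
      · subst hxy; simp [hW, Matrix.one_apply]
      · have h1 : σ y ≠ σ x := fun h => hxy (σ.injective h).symm
        simp [hW, Matrix.one_apply, hxy, h1]
    have hdσ : ∀ x, d (σ x) = d x := by
      intro x
      rcases eq_or_ne x a with rfl | hxa
      · rw [hσ, Equiv.swap_apply_left]; exact hdab.symm
      rcases eq_or_ne x b with rfl | hxb
      · rw [hσ, Equiv.swap_apply_right]; exact hdab
      · rw [hσ, Equiv.swap_apply_of_ne_of_ne hxa hxb]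
    have hWd : W * Matrix.diagonal d = Matrix.diagonal d * W := by
      ext x y
      rw [hWX, Matrix.diagonal_mul, Matrix.diagonal_apply]
      by_cases hy : y = σ x
      · subst hy; simp [hW, hdσ]
      · have h1 : σ x ≠ y := fun h => hy h.symm
        simp [hW, hy, h1]
    have h := hconj W hWmem hWd
    have h2 := congrFun (congrFun h a) a
    rw [hXWs, hWX] at h2
    rw [show σ a = b from Equiv.swap_apply_left a b] at h2
    exact h2.symm
  -- trace of M'
  have htrM' : M'.trace = 1 := by
    rw [hM'def, Matrix.mul_assoc, Matrix.trace_mul_comm, Matrix.mul_assoc, hVVs, Matrix.mul_one, htrM]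
  -- rank of P is K
  have hrank : P.rank = K := by
    have hQrange : Q = LinearMap.range P.mulVecLin := by
      ext v
      rw [hPrange]
      constructor
      · intro hv; exact ⟨v, hv⟩
      · rintro ⟨w, rfl⟩
        show P.mulVec (P.mulVec w) = P.mulVec w
        rw [Matrix.mulVec_mulVec, hPidem]
    rw [Matrix.rank, ← hQrange, hQK]
  have hcard : (Finset.univ.filter fun i => d i = 1).card = K := by
    have h1 : P.rank = Fintype.card {i // hPherm.eigenvalues i ≠ 0} :=
      hPherm.rank_eq_card_non_zero_eigs
    rw [hrank] at h1
    have h2 : (Finset.univ.filter fun i => d i = 1)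
        = (Finset.univ.filter fun i => hPherm.eigenvalues i ≠ 0) := by
      ext i
      simp only [Finset.mem_filter, Finset.mem_univ, true_and]
      constructor
      · intro hi h0
        rw [hddef] at hi
        simp only [Function.comp_apply, h0] at hi
        norm_num at hi
      · intro h0
        rcases hd01 i with h | h
        · exfalso
          apply h0
          rw [hddef] at h
          simp only [Function.comp_apply] at h
          simpa using h
        · exact h
    rw [h2, h1, Fintype.card_subtype]
  -- zero diagonal entries off the code block
  have hdiagzero : ∀ i, d i = 0 → M' i i = 0 := by
    intro i hi
    have h2 := congrFun (congrFun hdM' i) i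
    rw [Matrix.diagonal_mul, hi, zero_mul] at h2
    exact h2.symm
  have hKne : (K : ℂ) ≠ 0 := Nat.cast_ne_zero.mpr (by omega)
  -- M' = K⁻¹ • diagonal d
  have hM'eq : M' = (K : ℂ)⁻¹ • Matrix.diagonal d := by
    have hKpos : 0 < (Finset.univ.filter fun i => d i = 1).card := by rw [hcard]; omega
    obtain ⟨i0, hi0mem⟩ := Finset.card_pos.mp hKpos
    have hi0 : d i0 = 1 := (Finset.mem_filter.mp hi0mem).2
    have h4 : ∑ i, M' i i = 1 := by
      rw [← htrM']; rfl
    have hsum : ∑ i ∈ Finset.univ.filter (fun i : ι => d i = 1), M' i i = 1 := by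
      refine Eq.trans (Finset.sum_subset (Finset.filter_subset _ _) ?_) h4
      intro i _ hni
      rcases hd01 i with h | h
      · exact hdiagzero i h
      · exact absurd (Finset.mem_filter.mpr ⟨Finset.mem_univ i, h⟩) hni
    have hconst : ∀ i ∈ Finset.univ.filter (fun i : ι => d i = 1), M' i i = M' i0 i0 := by
      intro i hi
      exact hswap i i0 (by rw [(Finset.mem_filter.mp hi).2, hi0])
    rw [Finset.sum_congr rfl hconst, Finset.sum_const, hcard] at hsum
    have hval : M' i0 i0 = (K : ℂ)⁻¹ := by
      have hKm : (K : ℂ) * M' i0 i0 = 1 := by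
        simpa [nsmul_eq_mul] using hsum
      exact eq_inv_of_mul_eq_one_right (by linear_combination hKm)
    ext x y
    rcases eq_or_ne x y with rfl | hxy
    · rw [Matrix.smul_apply, Matrix.diagonal_apply_eq]
      rcases hd01 x with h | h
      · rw [hdiagzero x h, h, smul_zero]
      · rw [hswap x i0 (by rw [h, hi0]), hval, h, smul_eq_mul, mul_one]
    · rw [hoff x y hxy, Matrix.smul_apply, Matrix.diagonal_apply_ne _ hxy, smul_zero]
  -- conclude
  calc M = V * M' * star V := hMrec
    _ = (K : ℂ)⁻¹ • (V * Matrix.diagonal d * star V) := by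
        rw [hM'eq, Matrix.mul_smul, Matrix.smul_mul]
    _ = (K : ℂ)⁻¹ • P := by rw [← hPdecomp]


set_option maxHeartbeats 1000000 in
lemma exp_lemma {ι : Type*} [Fintype ι] [DecidableEq ι] (K : ℕ) (hK : 1 ≤ K)
    (Q : Submodule ℂ (ι → ℂ)) (hQK : Module.finrank ℂ Q = K)
    (P : Matrix ι ι ℂ) (hPherm : P.IsHermitian) (hPidem : P * P = P)
    (hPrange : ∀ v, v ∈ Q ↔ P.mulVec v = v)
    (μ : Measure (ι → ℂ)) [IsProbabilityMeasure μ]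
    (hsupp : ∀ᵐ ψ ∂μ, ψ ∈ Q ∧ star ψ ⬝ᵥ ψ = 1)
    (hinv : ∀ U : Matrix ι ι ℂ, U ∈ Matrix.unitaryGroup ι ℂ →
      (∀ v ∈ Q, U.mulVec v ∈ Q) → μ.map U.mulVec = μ)
    (B : Matrix ι ι ℂ) :
    ∫ ψ, star ψ ⬝ᵥ B.mulVec ψ ∂μ = (K : ℂ)⁻¹ * (B * P).trace := by
  classical
  have hnorm1 : ∀ᵐ ψ ∂μ, ∀ f, ‖ψ f‖ ≤ 1 := by
    filter_upwards [hsupp] with ψ hψ f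
    obtain ⟨-, h1⟩ := hψ
    have hsum : ∑ i, ((Complex.normSq (ψ i) : ℝ) : ℂ) = 1 := by
      rw [← h1]
      simp [dotProduct, Pi.star_apply, Complex.normSq_eq_conj_mul_self]
    have hsumR : ∑ i, Complex.normSq (ψ i) = 1 := by
      have := hsum
      rw [← Complex.ofReal_sum] at this
      exact_mod_cast this
    have hle : Complex.normSq (ψ f) ≤ 1 := by
      rw [← hsumR]
      exact Finset.single_le_sum (fun i _ => Complex.normSq_nonneg _) (Finset.mem_univ f)
    have h2 : ‖ψ f‖ ^ 2 ≤ 1 := by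
      rw [Complex.sq_norm]; exact hle
    nlinarith [norm_nonneg (ψ f)]
  have hmeas : ∀ f g : ι, Measurable fun ψ : ι → ℂ => ψ g * (starRingEnd ℂ) (ψ f) :=
    fun f g => (measurable_pi_apply g).mul
      (continuous_star.measurable.comp (measurable_pi_apply f))
  have hInt : ∀ f g : ι, Integrable (fun ψ : ι → ℂ => ψ g * (starRingEnd ℂ) (ψ f)) μ := by
    intro f g
    refine Integrable.mono' (integrable_const 1) ((hmeas f g).aestronglyMeasurable) ?_
    filter_upwards [hnorm1] with ψ h
    calc ‖ψ g * (starRingEnd ℂ) (ψ f)‖ = ‖ψ g‖ * ‖ψ f‖ := by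
          rw [norm_mul, RCLike.norm_conj]
      _ ≤ 1 * 1 := mul_le_mul (h g) (h f) (norm_nonneg _) zero_le_one
      _ = 1 := one_mul 1
  have hAvg := avg_lemma K hK Q hQK P hPherm hPidem hPrange μ hsupp hinv
  have hpt : ∀ ψ : ι → ℂ, star ψ ⬝ᵥ B.mulVec ψ
      = ∑ f, ∑ g, B f g * (ψ g * (starRingEnd ℂ) (ψ f)) := by
    intro ψ
    simp only [dotProduct, Matrix.mulVec, Pi.star_apply, Finset.mul_sum]
    exact Finset.sum_congr rfl fun f _ => Finset.sum_congr rfl fun g _ => by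
      simp only [RCLike.star_def]; ring
  simp only [hpt]
  refine (integral_finset_sum _
    (fun f _ => integrable_finset_sum _ (fun g _ => (hInt f g).const_mul _))).trans ?_
  have h1 : ∀ f, ∫ ψ, ∑ g, B f g * (ψ g * (starRingEnd ℂ) (ψ f)) ∂μ
      = ∑ g, B f g * (∫ ψ, ψ g * (starRingEnd ℂ) (ψ f) ∂μ) := by
    intro f
    rw [integral_finset_sum _ (fun g _ => (hInt f g).const_mul _)]
    exact Finset.sum_congr rfl fun g _ => integral_const_mul _ _
  simp only [h1]
  have h2 : ∀ f g : ι, (∫ ψ, ψ g * (starRingEnd ℂ) (ψ f) ∂μ) = ((K : ℂ)⁻¹ • P) g f := by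
    intro f g
    rw [← hAvg]
    rfl
  calc ∑ f, ∑ g, B f g * (∫ ψ, ψ g * (starRingEnd ℂ) (ψ f) ∂μ)
      = ∑ f, ∑ g, B f g * ((K : ℂ)⁻¹ • P) g f := by
        exact Finset.sum_congr rfl fun f _ => Finset.sum_congr rfl fun g _ => by rw [h2]
    _ = (B * ((K : ℂ)⁻¹ • P)).trace := by
        simp [Matrix.trace, Matrix.diag, Matrix.mul_apply]
    _ = (K : ℂ)⁻¹ * (B * P).trace := by
        rw [Matrix.mul_smul, Matrix.trace_smul, smul_eq_mul]

/-- For the projector `P` of an `((n,K))_D` code `Q` and a random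
depolarizing error `Υ_S` acting on the qudits in `S`
(i.e. `E[Υ_S† A Υ_S] = D^{−|S|} I_S ⊗ tr_S(A)`), with `ψ` uniformly random on the
unit vectors of `Q`, the transmission rate under error detection is
`E_{Υ_S} E_ψ[⟨ψ|Υ_S† P Υ_S|ψ⟩] = D^{−|S|} K^{−1} tr_{S'}[(tr_S P)²] = D^{−|S|} B_S'(P)`. -/
theorem stmt_11 (n D K : ℕ) (hD : 2 ≤ D) (hK : 1 ≤ K) (S : Finset (Fin n))
    (Q : Submodule ℂ ((Fin n → Fin D) → ℂ))
    (hQK : Module.finrank ℂ Q = K)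
    (P : Matrix (Fin n → Fin D) (Fin n → Fin D) ℂ)
    (hPherm : P.IsHermitian) (hPidem : P * P = P)
    (hPrange : ∀ v : (Fin n → Fin D) → ℂ, v ∈ Q ↔ P.mulVec v = v)
    -- the uniform (unitarily invariant) measure on unit vectors of `Q`
    (μ : Measure ((Fin n → Fin D) → ℂ)) [IsProbabilityMeasure μ]
    (hsupp : ∀ᵐ ψ ∂μ, ψ ∈ Q ∧ star ψ ⬝ᵥ ψ = 1)
    (hinv : ∀ U : Matrix (Fin n → Fin D) (Fin n → Fin D) ℂ,
      U ∈ Matrix.unitaryGroup (Fin n → Fin D) ℂ →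
      (∀ v ∈ Q, U.mulVec v ∈ Q) → μ.map U.mulVec = μ)
    -- the random depolarizing error acting on the qudits in `S`
    (Ω : Type) [MeasurableSpace Ω] (ν : Measure Ω) [IsProbabilityMeasure ν]
    (Υ : Ω → Matrix (Fin n → Fin D) (Fin n → Fin D) ℂ)
    (hΥInt : ∀ (A : Matrix (Fin n → Fin D) (Fin n → Fin D) ℂ) f g,
      Integrable (fun ω => ((Υ ω)ᴴ * A * Υ ω) f g) ν)
    (hΥdep : ∀ (A : Matrix (Fin n → Fin D) (Fin n → Fin D) ℂ) f g,
      ∫ ω, ((Υ ω)ᴴ * A * Υ ω) f g ∂ν = idTensorPtr S A f g / (D : ℂ) ^ S.card) :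
    ∫ ψ, ∫ ω, star ψ ⬝ᵥ ((Υ ω)ᴴ * P * Υ ω).mulVec ψ ∂ν ∂μ =
      ((D : ℂ) ^ S.card)⁻¹ * ((1 / (K : ℂ)) * (ptr S P * ptr S P).trace) := by
  classical
  set A : Matrix (Fin n → Fin D) (Fin n → Fin D) ℂ :=
    ((D : ℂ) ^ S.card)⁻¹ • idTensorPtr S P with hA
  have hinner : ∀ ψ : (Fin n → Fin D) → ℂ,
      ∫ ω, star ψ ⬝ᵥ ((Υ ω)ᴴ * P * Υ ω).mulVec ψ ∂ν = star ψ ⬝ᵥ A.mulVec ψ := by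
    intro ψ
    have hpt : ∀ ω, star ψ ⬝ᵥ ((Υ ω)ᴴ * P * Υ ω).mulVec ψ
        = ∑ f, ∑ g, ((starRingEnd ℂ) (ψ f) * ψ g) * ((Υ ω)ᴴ * P * Υ ω) f g := by
      intro ω
      simp only [dotProduct, Matrix.mulVec, Pi.star_apply, Finset.mul_sum]
      exact Finset.sum_congr rfl fun f _ => Finset.sum_congr rfl fun g _ => by
        simp only [RCLike.star_def]; ring
    simp only [hpt]
    rw [integral_finset_sum _
      (fun f _ => integrable_finset_sum _ (fun g _ => (hΥInt P f g).const_mul _))]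
    have h1 : ∀ f, ∫ ω, ∑ g, ((starRingEnd ℂ) (ψ f) * ψ g) * ((Υ ω)ᴴ * P * Υ ω) f g ∂ν
        = ∑ g, ((starRingEnd ℂ) (ψ f) * ψ g) * (idTensorPtr S P f g / (D : ℂ) ^ S.card) := by
      intro f
      rw [integral_finset_sum _ (fun g _ => (hΥInt P f g).const_mul _)]
      exact Finset.sum_congr rfl fun g _ => by rw [integral_const_mul, hΥdep]
    simp only [h1]
    simp only [hA, dotProduct, Matrix.mulVec, Pi.star_apply, Finset.mul_sum,
      Matrix.smul_apply, smul_eq_mul]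
    exact Finset.sum_congr rfl fun f _ => Finset.sum_congr rfl fun g _ => by
      simp only [RCLike.star_def]; rw [div_eq_mul_inv]; ring
  have h2 : ∫ ψ, ∫ ω, star ψ ⬝ᵥ ((Υ ω)ᴴ * P * Υ ω).mulVec ψ ∂ν ∂μ
      = ∫ ψ, star ψ ⬝ᵥ A.mulVec ψ ∂μ :=
    integral_congr_ae (Filter.Eventually.of_forall hinner)
  rw [h2, exp_lemma K hK Q hQK P hPherm hPidem hPrange μ hsupp hinv A]
  rw [hA, Matrix.smul_mul, Matrix.trace_smul, trace_idTensorPtr_mul, smul_eq_mul]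
  rw [one_div]
  ring


end
end

section
/- For an ((n,K))_D code with projector P, the transmission fidelity under error detection F^d_S(P) = [K A_S'(P) + B_S'(P)]/[(K+1) B_S'(P)] satisfies 1/K ≤ F^d_S(P) ≤ 1 for every S ⊆ {1,…,n}, with F^d_∅ = 1 and F^d_{{1,…,n}} = 1/K. -/
open Matrix

noncomputable section

/-- Transmission fidelity on qudits `S` under error detection,
`F^d_S(P) = [K·A_S'(P) + B_S'(P)] / [(K+1)·B_S'(P)]`. -/
def Fdet {n D : ℕ} (K : ℕ) (S : Finset (Fin n))
    (P : Matrix (Fin n → Fin D) (Fin n → Fin D) ℂ) : ℝ :=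
  ((K : ℝ) * Arains K S P + Brains K S P) / (((K : ℝ) + 1) * Brains K S P)

/-! ### Auxiliary machinery -/

section Aux

set_option linter.unusedSectionVars false

open Finset

lemma sum_comm4 {A A' B B' γ : Type*} [Fintype A] [Fintype A'] [Fintype B] [Fintype B']
    [AddCommMonoid γ] (f : A → A' → B → B' → γ) :
    ∑ a, ∑ a', ∑ b, ∑ b', f a a' b b' = ∑ b, ∑ b', ∑ a, ∑ a', f a a' b b' := by
  calc ∑ a, ∑ a', ∑ b, ∑ b', f a a' b b'
      = ∑ a, ∑ b, ∑ a', ∑ b', f a a' b b' :=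
        Finset.sum_congr rfl fun a _ => Finset.sum_comm
    _ = ∑ b, ∑ a, ∑ a', ∑ b', f a a' b b' := Finset.sum_comm
    _ = ∑ b, ∑ a, ∑ b', ∑ a', f a a' b b' :=
        Finset.sum_congr rfl fun b _ => Finset.sum_congr rfl fun a _ => Finset.sum_comm
    _ = ∑ b, ∑ b', ∑ a, ∑ a', f a a' b b' :=
        Finset.sum_congr rfl fun b _ => Finset.sum_comm

lemma key_re (z w : ℂ) :
    (z * (starRingEnd ℂ) w).re ≤ ((z * (starRingEnd ℂ) z).re + (w * (starRingEnd ℂ) w).re)/2 := by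
  have h1 : (z * (starRingEnd ℂ) w).re ≤ ‖z * (starRingEnd ℂ) w‖ :=
    Complex.re_le_norm _
  have h2 : ‖z * (starRingEnd ℂ) w‖ = ‖z‖ * ‖w‖ := by
    rw [norm_mul, Complex.norm_conj]
  have h4 : (z * (starRingEnd ℂ) z).re = ‖z‖ ^ 2 := by
    rw [Complex.mul_conj]; simp [Complex.sq_norm]
  have h5 : (w * (starRingEnd ℂ) w).re = ‖w‖ ^ 2 := by
    rw [Complex.mul_conj]; simp [Complex.sq_norm]
  nlinarith [sq_nonneg (‖z‖ - ‖w‖)]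

lemma key_re_nonneg (z : ℂ) : 0 ≤ (z * (starRingEnd ℂ) z).re := by
  rw [Complex.mul_conj]
  simpa using Complex.normSq_nonneg z

/-- Spectral decomposition of a Hermitian idempotent into vectors with 0/1 weights. -/
lemma exists_decomp {I : Type*} [Fintype I] [DecidableEq I] (P : Matrix I I ℂ)
    (hP : P.IsHermitian) (hidem : P * P = P) :
    ∃ (d : I → ℝ) (ψ : I → I → ℂ),
      (∀ i, d i = 0 ∨ d i = 1) ∧
      P.trace = ((∑ i, d i : ℝ) : ℂ) ∧
      (∀ x y, P x y = ∑ i, (d i : ℂ) * (ψ i x * (starRingEnd ℂ) (ψ i y))) := by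
  classical
  set d : I → ℝ := hP.eigenvalues with hd'
  set ψ : I → I → ℂ := fun i x => (hP.eigenvectorBasis i : EuclideanSpace ℂ I) x with hψ'
  have hUapp : ∀ x i, (hP.eigenvectorUnitary : Matrix I I ℂ) x i = ψ i x := fun x i => rfl
  have hdec : ∀ x y, P x y = ∑ i, (d i : ℂ) * (ψ i x * (starRingEnd ℂ) (ψ i y)) := by
    intro x y
    conv_lhs => rw [hP.spectral_theorem]
    rw [Unitary.conjStarAlgAut_apply, Matrix.mul_apply]
    refine Finset.sum_congr rfl fun j _ => ?_
    rw [Matrix.mul_diagonal, Matrix.star_apply]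
    rw [hUapp, hUapp]
    simp only [Function.comp_apply, RCLike.star_def]
    show ψ j x * ((d j : ℂ)) * (starRingEnd ℂ) (ψ j y) = _
    ring
  have hd : ∀ i, d i = 0 ∨ d i = 1 := by
    intro i
    have h1 := hP.mulVec_eigenvectorBasis i
    have h2 : P *ᵥ (P *ᵥ ⇑(hP.eigenvectorBasis i)) = (d i * d i) • ⇑(hP.eigenvectorBasis i) := by
      rw [h1, Matrix.mulVec_smul, h1, smul_smul]
    rw [Matrix.mulVec_mulVec, hidem, h1] at h2
    have hne : ⇑(hP.eigenvectorBasis i) ≠ 0 := by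
      intro h
      exact hP.eigenvectorBasis.orthonormal.ne_zero i (by ext x; exact congrFun h x)
    obtain ⟨x, hx⟩ := Function.ne_iff.mp hne
    have h3 := congrFun h2 x
    rw [Pi.smul_apply, Pi.smul_apply, Complex.real_smul, Complex.real_smul] at h3
    have h5 : ((d i : ℝ) : ℂ) = ((d i * d i : ℝ) : ℂ) := mul_right_cancel₀ hx h3
    have h6 : d i * d i = d i := by exact_mod_cast h5.symm
    rcases mul_eq_zero.mp (show d i * (d i - 1) = 0 by nlinarith) with h | h
    · exact Or.inl h
    · exact Or.inr (by linarith)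
  have horth : ∀ i, (∑ x, ψ i x * (starRingEnd ℂ) (ψ i x)) = 1 := by
    intro i
    have h1 : star (hP.eigenvectorUnitary : Matrix I I ℂ) * hP.eigenvectorUnitary = 1 :=
      Matrix.mem_unitaryGroup_iff'.mp hP.eigenvectorUnitary.2
    have h2 : (star (hP.eigenvectorUnitary : Matrix I I ℂ) * hP.eigenvectorUnitary) i i
        = (1 : Matrix I I ℂ) i i := by rw [h1]
    rw [Matrix.mul_apply, Matrix.one_apply_eq] at h2
    calc ∑ x, ψ i x * (starRingEnd ℂ) (ψ i x)
        = ∑ x, star ((hP.eigenvectorUnitary : Matrix I I ℂ)) i x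
            * (hP.eigenvectorUnitary : Matrix I I ℂ) x i := by
          refine Finset.sum_congr rfl fun x _ => ?_
          rw [Matrix.star_apply, hUapp, RCLike.star_def, mul_comm]
      _ = 1 := h2
  refine ⟨d, ψ, hd, ?_, hdec⟩
  · rw [Matrix.trace]
    simp only [Matrix.diag]
    calc ∑ x, P x x = ∑ x, ∑ i, (d i : ℂ) * (ψ i x * (starRingEnd ℂ) (ψ i x)) :=
          Finset.sum_congr rfl fun x _ => hdec x x
      _ = ∑ i, (d i : ℂ) * (∑ x, ψ i x * (starRingEnd ℂ) (ψ i x)) := by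
          rw [Finset.sum_comm]
          exact Finset.sum_congr rfl fun i _ => by rw [Finset.mul_sum]
      _ = ∑ i, (d i : ℂ) := by
          refine Finset.sum_congr rfl fun i _ => by rw [horth i, mul_one]
      _ = ((∑ i, d i : ℝ) : ℂ) := by push_cast; rfl

/-- The key Rains-type inequality in abstract summation form. -/
lemma core {ι U V I : Type*} [Fintype ι] [Fintype U] [Fintype V]
    (ψ : ι → I → ℂ) (d : ι → ℝ) (hd : ∀ i, d i = 0 ∨ d i = 1)
    (e : U → V → I) (P : Matrix I I ℂ)
    (hdec : ∀ x y, P x y = ∑ i, (d i : ℂ) * (ψ i x * (starRingEnd ℂ) (ψ i y))) :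
    (∑ u, ∑ u', (∑ v, P (e u v) (e u' v)) * (∑ w, P (e u' w) (e u w))).re
      ≤ (∑ i, d i) * (∑ v, ∑ w, (∑ u, P (e u v) (e u w)) * (∑ u', P (e u' w) (e u' v))).re := by
  classical
  set σ : ι → ι → U → U → ℂ :=
    fun i j u u' => ∑ v, ψ i (e u v) * (starRingEnd ℂ) (ψ j (e u' v)) with hσ
  set τ : ι → ι → V → V → ℂ :=
    fun i j v w => ∑ u, ψ i (e u v) * (starRingEnd ℂ) (ψ j (e u w)) with hτ
  have hd0 : ∀ i, 0 ≤ d i := fun i => by rcases hd i with h | h <;> simp [h]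
  have hdd : ∀ i, d i * d i = d i := fun i => by rcases hd i with h | h <;> simp [h]
  have hrow : ∀ u u' : U, (∑ v, P (e u v) (e u' v)) = ∑ i, (d i : ℂ) * σ i i u u' := by
    intro u u'
    calc ∑ v, P (e u v) (e u' v)
        = ∑ v, ∑ i, (d i : ℂ) * (ψ i (e u v) * (starRingEnd ℂ) (ψ i (e u' v))) :=
          Finset.sum_congr rfl fun v _ => hdec _ _
      _ = ∑ i, ∑ v, (d i : ℂ) * (ψ i (e u v) * (starRingEnd ℂ) (ψ i (e u' v))) :=
          Finset.sum_comm
      _ = ∑ i, (d i : ℂ) * σ i i u u' :=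
          Finset.sum_congr rfl fun i _ => by rw [hσ]; rw [Finset.mul_sum]
  have hcol : ∀ v w : V, (∑ u, P (e u v) (e u w)) = ∑ i, (d i : ℂ) * τ i i v w := by
    intro v w
    calc ∑ u, P (e u v) (e u w)
        = ∑ u, ∑ i, (d i : ℂ) * (ψ i (e u v) * (starRingEnd ℂ) (ψ i (e u w))) :=
          Finset.sum_congr rfl fun u _ => hdec _ _
      _ = ∑ i, ∑ u, (d i : ℂ) * (ψ i (e u v) * (starRingEnd ℂ) (ψ i (e u w))) :=
          Finset.sum_comm
      _ = ∑ i, (d i : ℂ) * τ i i v w :=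
          Finset.sum_congr rfl fun i _ => by rw [hτ]; rw [Finset.mul_sum]
  have hσc : ∀ j (u u' : U), σ j j u' u = (starRingEnd ℂ) (σ j j u u') := by
    intro j u u'
    rw [hσ, map_sum]
    exact Finset.sum_congr rfl fun v _ => by
      rw [_root_.map_mul, Complex.conj_conj, mul_comm]
  have hb : (∑ u, ∑ u', (∑ v, P (e u v) (e u' v)) * (∑ w, P (e u' w) (e u w)))
      = ∑ i, ∑ j, (d i : ℂ) * (d j : ℂ)
          * ∑ u, ∑ u', σ i i u u' * (starRingEnd ℂ) (σ j j u u') := by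
    calc ∑ u, ∑ u', (∑ v, P (e u v) (e u' v)) * (∑ w, P (e u' w) (e u w))
        = ∑ u, ∑ u', ∑ i, ∑ j,
            (d i : ℂ) * (d j : ℂ) * (σ i i u u' * (starRingEnd ℂ) (σ j j u u')) := by
          refine Finset.sum_congr rfl fun u _ => Finset.sum_congr rfl fun u' _ => ?_
          rw [hrow u u', hrow u' u, Fintype.sum_mul_sum]
          refine Finset.sum_congr rfl fun i _ => Finset.sum_congr rfl fun j _ => ?_
          rw [hσc j u u']; ring
      _ = ∑ i, ∑ j, ∑ u, ∑ u',
            (d i : ℂ) * (d j : ℂ) * (σ i i u u' * (starRingEnd ℂ) (σ j j u u')) :=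
          sum_comm4 _
      _ = ∑ i, ∑ j, (d i : ℂ) * (d j : ℂ)
            * ∑ u, ∑ u', σ i i u u' * (starRingEnd ℂ) (σ j j u u') := by
          refine Finset.sum_congr rfl fun i _ => Finset.sum_congr rfl fun j _ => ?_
          simp only [Finset.mul_sum]
  have hswap : ∀ i j, (∑ v, ∑ w, τ i i v w * τ j j w v)
      = ∑ u, ∑ u', σ i j u u' * (starRingEnd ℂ) (σ i j u u') := by
    intro i j
    calc ∑ v, ∑ w, τ i i v w * τ j j w v
        = ∑ v, ∑ w, ∑ u, ∑ u',
            (ψ i (e u v) * (starRingEnd ℂ) (ψ i (e u w)))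
              * (ψ j (e u' w) * (starRingEnd ℂ) (ψ j (e u' v))) := by
          refine Finset.sum_congr rfl fun v _ => Finset.sum_congr rfl fun w _ => ?_
          rw [hτ]
          exact Fintype.sum_mul_sum _ _
      _ = ∑ u, ∑ u', ∑ v, ∑ w,
            (ψ i (e u v) * (starRingEnd ℂ) (ψ i (e u w)))
              * (ψ j (e u' w) * (starRingEnd ℂ) (ψ j (e u' v))) := sum_comm4 _
      _ = ∑ u, ∑ u', σ i j u u' * (starRingEnd ℂ) (σ i j u u') := by
          refine Finset.sum_congr rfl fun u _ => Finset.sum_congr rfl fun u' _ => ?_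
          rw [hσ, map_sum, Fintype.sum_mul_sum]
          refine Finset.sum_congr rfl fun v _ => Finset.sum_congr rfl fun w _ => ?_
          rw [_root_.map_mul, Complex.conj_conj]
          ring
  have ha : (∑ v, ∑ w, (∑ u, P (e u v) (e u w)) * (∑ u', P (e u' w) (e u' v)))
      = ∑ i, ∑ j, (d i : ℂ) * (d j : ℂ)
          * ∑ u, ∑ u', σ i j u u' * (starRingEnd ℂ) (σ i j u u') := by
    calc ∑ v, ∑ w, (∑ u, P (e u v) (e u w)) * (∑ u', P (e u' w) (e u' v))
        = ∑ v, ∑ w, ∑ i, ∑ j, (d i : ℂ) * (d j : ℂ) * (τ i i v w * τ j j w v) := by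
          refine Finset.sum_congr rfl fun v _ => Finset.sum_congr rfl fun w _ => ?_
          rw [hcol v w, hcol w v, Fintype.sum_mul_sum]
          refine Finset.sum_congr rfl fun i _ => Finset.sum_congr rfl fun j _ => ?_
          ring
      _ = ∑ i, ∑ j, ∑ v, ∑ w, (d i : ℂ) * (d j : ℂ) * (τ i i v w * τ j j w v) :=
          sum_comm4 _
      _ = ∑ i, ∑ j, (d i : ℂ) * (d j : ℂ)
            * ∑ u, ∑ u', σ i j u u' * (starRingEnd ℂ) (σ i j u u') := by
          refine Finset.sum_congr rfl fun i _ => Finset.sum_congr rfl fun j _ => ?_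
          rw [← hswap i j]
          simp only [Finset.mul_sum]
  rw [hb, ha]
  simp only [Complex.re_sum, ← Complex.ofReal_mul, Complex.re_ofReal_mul]
  set T : ι → ι → ℝ :=
    fun i j => ∑ u, ∑ u', (σ i j u u' * (starRingEnd ℂ) (σ i j u u')).re with hT
  have hT0 : ∀ i j, 0 ≤ T i j := fun i j =>
    Finset.sum_nonneg fun u _ => Finset.sum_nonneg fun u' _ => key_re_nonneg _
  have hmid : (∑ i, ∑ j, d i * d j
      * (∑ u, ∑ u', (σ i i u u' * (starRingEnd ℂ) (σ j j u u')).re))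
      ≤ ∑ i, ∑ j, d i * d j * ((T i i + T j j)/2) := by
    refine Finset.sum_le_sum fun i _ => Finset.sum_le_sum fun j _ => ?_
    refine mul_le_mul_of_nonneg_left ?_ (mul_nonneg (hd0 i) (hd0 j))
    have h := Finset.sum_le_sum (s := Finset.univ)
      (fun (u : U) _ => Finset.sum_le_sum (s := Finset.univ)
        (fun (u' : U) _ => key_re (σ i i u u') (σ j j u u')))
    refine le_trans h (le_of_eq ?_)
    rw [hT]
    simp only [← Finset.sum_div, Finset.sum_add_distrib]
  have halg : (∑ i, ∑ j, d i * d j * ((T i i + T j j)/2))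
      = (∑ i, d i) * (∑ i, d i * T i i) := by
    have hexp : ∀ i j, d i * d j * ((T i i + T j j)/2)
        = ((d i * T i i) * d j + d i * (d j * T j j))/2 := fun i j => by ring
    simp only [hexp]
    simp only [← Finset.sum_div, Finset.sum_add_distrib, ← Finset.mul_sum, ← Finset.sum_mul]
    ring
  have hlow : (∑ i, d i * T i i) ≤ ∑ i, ∑ j, d i * d j * T i j := by
    refine Finset.sum_le_sum fun i _ => ?_
    calc d i * T i i = d i * d i * T i i := by rw [hdd]
      _ ≤ ∑ j, d i * d j * T i j :=
        Finset.single_le_sum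
          (fun j _ => mul_nonneg (mul_nonneg (hd0 i) (hd0 j)) (hT0 i j))
          (Finset.mem_univ i)
  calc (∑ i, ∑ j, d i * d j
      * (∑ u, ∑ u', (σ i i u u' * (starRingEnd ℂ) (σ j j u u')).re))
      ≤ ∑ i, ∑ j, d i * d j * ((T i i + T j j)/2) := hmid
    _ = (∑ i, d i) * (∑ i, d i * T i i) := halg
    _ ≤ (∑ i, d i) * (∑ i, ∑ j, d i * d j * T i j) :=
        mul_le_mul_of_nonneg_left hlow (Finset.sum_nonneg fun i _ => hd0 i)

variable {n : ℕ} {α : Type*} [Fintype α]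

/-- glue as an equivalence. -/
def gEquiv (S : Finset (Fin n)) (α : Type*) :
    (({i // i ∈ S} → α) × ({i // i ∉ S} → α)) ≃ (Fin n → α) :=
  (Equiv.piEquivPiSubtypeProd (fun i : Fin n => i ∈ S) (fun _ => α)).symm

lemma sum_glue {M : Type*} [AddCommMonoid M] (S : Finset (Fin n)) (f : (Fin n → α) → M) :
    ∑ x : Fin n → α, f x
      = ∑ u : {i // i ∈ S} → α, ∑ v : {i // i ∉ S} → α, f (glue S u v) := by
  rw [← Equiv.sum_comp (gEquiv S α) f, Fintype.sum_prod_type]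
  rfl

lemma trace_ptr (S : Finset (Fin n)) (M : Matrix (Fin n → α) (Fin n → α) ℂ) :
    (ptr S M).trace = M.trace := by
  rw [Matrix.trace, Matrix.trace]
  simp only [Matrix.diag, ptr]
  rw [sum_glue S (fun x => M x x), Finset.sum_comm]

lemma trace_ptr_mul_eq (S : Finset (Fin n)) (M : Matrix (Fin n → α) (Fin n → α) ℂ) :
    (ptr S M * ptr S M).trace
      = ∑ v, ∑ w, (∑ u, M (glue S u v) (glue S u w))
          * (∑ u', M (glue S u' w) (glue S u' v)) := by
  rw [Matrix.trace]
  simp only [Matrix.diag, Matrix.mul_apply, ptr]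

lemma ptr_isHermitian (S : Finset (Fin n)) (M : Matrix (Fin n → α) (Fin n → α) ℂ)
    (hM : M.IsHermitian) : (ptr S M).IsHermitian := by
  refine Matrix.IsHermitian.ext fun v w => ?_
  simp only [ptr]
  rw [star_sum]
  exact Finset.sum_congr rfl fun u _ => hM.apply _ _

lemma trace_sq_re_pos {J : Type*} [Fintype J] (M : Matrix J J ℂ) (hM : M.IsHermitian)
    (h0 : M.trace ≠ 0) : 0 < ((M * M).trace).re := by
  have hre : ((M * M).trace).re = ∑ i, ∑ j, Complex.normSq (M i j) := by
    rw [Matrix.trace]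
    simp only [Matrix.diag, Matrix.mul_apply]
    rw [Complex.re_sum]
    refine Finset.sum_congr rfl fun i _ => ?_
    rw [Complex.re_sum]
    refine Finset.sum_congr rfl fun j _ => ?_
    rw [show M j i = (starRingEnd ℂ) (M i j) from by rw [← hM.apply i j]; simp,
      Complex.mul_conj]
    simp
  rw [hre]
  rcases (Finset.sum_nonneg fun i (_ : i ∈ Finset.univ) =>
      Finset.sum_nonneg fun j _ => Complex.normSq_nonneg (M i j)).lt_or_eq with h | h
  · exact h
  · exfalso
    apply h0
    have hz : ∀ i ∈ Finset.univ, ∀ j ∈ (Finset.univ : Finset J), Complex.normSq (M i j) = 0 := by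
      intro i _ j hj
      have h1 := (Finset.sum_eq_zero_iff_of_nonneg
        (fun i _ => Finset.sum_nonneg fun j _ => Complex.normSq_nonneg (M i j))).mp h.symm i
        (Finset.mem_univ i)
      exact (Finset.sum_eq_zero_iff_of_nonneg
        (fun j _ => Complex.normSq_nonneg (M i j))).mp h1 j hj
    rw [Matrix.trace]
    refine Finset.sum_eq_zero fun i _ => ?_
    exact Complex.normSq_eq_zero.mp (hz i (Finset.mem_univ i) i (Finset.mem_univ i))

/-- reindexing equivalences for the complement -/
def sEquiv (S : Finset (Fin n)) (α : Type*) :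
    ({i : Fin n // i ∈ S} → α) ≃ ({i : Fin n // i ∉ Sᶜ} → α) where
  toFun a := fun j => a ⟨j.1, of_not_not (fun hn => j.2 (Finset.mem_compl.mpr hn))⟩
  invFun b := fun j => b ⟨j.1, fun h => (Finset.mem_compl.mp h) j.2⟩
  left_inv a := rfl
  right_inv b := rfl

def tEquiv (S : Finset (Fin n)) (α : Type*) :
    ({i : Fin n // i ∉ S} → α) ≃ ({i : Fin n // i ∈ Sᶜ} → α) where
  toFun c := fun j => c ⟨j.1, Finset.mem_compl.mp j.2⟩
  invFun b := fun j => b ⟨j.1, Finset.mem_compl.mpr j.2⟩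
  left_inv a := rfl
  right_inv b := rfl

lemma glue_compl (S : Finset (Fin n)) (a : {i // i ∈ S} → α) (c : {i // i ∉ S} → α) :
    glue Sᶜ (tEquiv S α c) (sEquiv S α a) = glue S a c := by
  funext i
  by_cases h : i ∈ S
  · have h' : i ∉ Sᶜ := by simpa using h
    simp only [glue, dif_pos h, dif_neg h']
    rfl
  · have h' : i ∈ Sᶜ := by simpa using h
    simp only [glue, dif_pos h', dif_neg h]
    rfl

lemma swap_shape (S : Finset (Fin n)) (M : Matrix (Fin n → α) (Fin n → α) ℂ) :
    (ptr Sᶜ M * ptr Sᶜ M).trace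
      = ∑ a : {i // i ∈ S} → α, ∑ b : {i // i ∈ S} → α,
          (∑ c : {i // i ∉ S} → α, M (glue S a c) (glue S b c))
            * (∑ c' : {i // i ∉ S} → α, M (glue S b c') (glue S a c')) := by
  rw [trace_ptr_mul_eq]
  refine (Fintype.sum_equiv (sEquiv S α) _ _ fun a => ?_).symm
  refine Fintype.sum_equiv (sEquiv S α) _ _ fun b => ?_
  congr 1
  · refine Fintype.sum_equiv (tEquiv S α) _ _ fun c => ?_
    rw [glue_compl, glue_compl]
  · refine Fintype.sum_equiv (tEquiv S α) _ _ fun c => ?_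
    rw [glue_compl, glue_compl]

lemma ptr_trace_sq_of_isEmpty_mem (S : Finset (Fin n)) [IsEmpty {i : Fin n // i ∈ S}]
    (M : Matrix (Fin n → α) (Fin n → α) ℂ) :
    (ptr S M * ptr S M).trace = (M * M).trace := by
  let E : ({i : Fin n // i ∉ S} → α) ≃ (Fin n → α) :=
    (Equiv.uniqueProd ({i : Fin n // i ∉ S} → α) ({i : Fin n // i ∈ S} → α)).symm.trans
      (gEquiv S α)
  have hE : ∀ v, E v = glue S default v := fun v => rfl
  calc (ptr S M * ptr S M).trace
      = ∑ v, ∑ w, M (glue S default v) (glue S default w)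
          * M (glue S default w) (glue S default v) := by
        rw [trace_ptr_mul_eq]
        exact Finset.sum_congr rfl fun v _ => Finset.sum_congr rfl fun w _ => by
          rw [Fintype.sum_unique, Fintype.sum_unique]
    _ = (M * M).trace := by
        rw [Matrix.trace]
        simp only [Matrix.diag, Matrix.mul_apply]
        refine Fintype.sum_equiv E _ _ fun v => ?_
        refine Fintype.sum_equiv E _ _ fun w => ?_
        rw [hE, hE]

lemma ptr_trace_sq_of_isEmpty_notMem (S : Finset (Fin n)) [IsEmpty {i : Fin n // i ∉ S}]
    (M : Matrix (Fin n → α) (Fin n → α) ℂ) :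
    (ptr S M * ptr S M).trace = M.trace * M.trace := by
  let E : ({i : Fin n // i ∈ S} → α) ≃ (Fin n → α) :=
    (Equiv.prodUnique ({i : Fin n // i ∈ S} → α) ({i : Fin n // i ∉ S} → α)).symm.trans
      (gEquiv S α)
  have hE : ∀ u, E u = glue S u default := fun u => rfl
  have htr : ∀ v : {i : Fin n // i ∉ S} → α,
      (∑ u, M (glue S u v) (glue S u v)) = M.trace := by
    intro v
    have hv : v = default := Subsingleton.elim _ _
    subst hv
    rw [Matrix.trace]
    simp only [Matrix.diag]
    refine Fintype.sum_equiv E _ _ fun u => ?_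
    rw [hE]
  rw [trace_ptr_mul_eq, Fintype.sum_unique, Fintype.sum_unique, htr]

end Aux

/-- For an `((n,K))_D` code with projector `P`, the detection
fidelity satisfies `1/K ≤ F^d_S(P) ≤ 1` for all `S`, with `F^d_∅ = 1` and
`F^d_{{1,…,n}} = 1/K`. -/
theorem stmt_13 (n D K : ℕ) (hD : 2 ≤ D) (hK : 1 ≤ K)
    (P : Matrix (Fin n → Fin D) (Fin n → Fin D) ℂ)
    (hPherm : P.IsHermitian) (hPidem : P * P = P) (hPtr : P.trace = (K : ℂ)) :
    (∀ S : Finset (Fin n), 1 / (K : ℝ) ≤ Fdet K S P ∧ Fdet K S P ≤ 1) ∧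
      Fdet K (∅ : Finset (Fin n)) P = 1 ∧
      Fdet K (Finset.univ : Finset (Fin n)) P = 1 / (K : ℝ) := by
  classical
  have hKR : (1:ℝ) ≤ (K:ℝ) := by exact_mod_cast hK
  have hK0 : (0:ℝ) < (K:ℝ) := lt_of_lt_of_le one_pos hKR
  have hKne : (K:ℝ) ≠ 0 := ne_of_gt hK0
  obtain ⟨d, ψ, hd, htr, hdec⟩ := exists_decomp P hPherm hPidem
  have hsum : (∑ i, d i) = (K:ℝ) := by
    have h : ((∑ i, d i : ℝ):ℂ) = ((K:ℝ):ℂ) := by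
      rw [← htr, hPtr]; norm_num
    exact_mod_cast h
  have htrP : P.trace ≠ 0 := by
    rw [hPtr]
    exact_mod_cast Nat.cast_ne_zero.mpr (by omega)
  have key : ∀ S : Finset (Fin n),
      0 < ((ptr S P * ptr S P).trace).re ∧
      ((ptr Sᶜ P * ptr Sᶜ P).trace).re ≤ (K:ℝ) * ((ptr S P * ptr S P).trace).re ∧
      ((ptr S P * ptr S P).trace).re ≤ (K:ℝ) * ((ptr Sᶜ P * ptr Sᶜ P).trace).re := by
    intro S
    have hpos : 0 < ((ptr S P * ptr S P).trace).re :=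
      trace_sq_re_pos _ (ptr_isHermitian S P hPherm) (by rw [trace_ptr]; exact htrP)
    refine ⟨hpos, ?_, ?_⟩
    · have h := core ψ d hd (glue S) P hdec
      rw [hsum] at h
      rw [swap_shape S P, trace_ptr_mul_eq S P]
      exact h
    · have h := core ψ d hd (fun v u => glue S u v) P hdec
      rw [hsum] at h
      rw [swap_shape S P, trace_ptr_mul_eq S P]
      exact h
  have hF : ∀ S : Finset (Fin n), Fdet K S P =
      (((ptr Sᶜ P * ptr Sᶜ P).trace).re + ((ptr S P * ptr S P).trace).re)
        / (((K:ℝ)+1) * ((ptr S P * ptr S P).trace).re) := by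
    intro S
    have hpos := (key S).1
    simp only [Fdet, Arains, Brains]
    field_simp
  refine ⟨fun S => ?_, ?_, ?_⟩
  · obtain ⟨hpos, h1, h2⟩ := key S
    rw [hF S]
    constructor
    · rw [div_le_div_iff₀ hK0 (by positivity)]
      nlinarith
    · rw [div_le_one (by positivity)]
      nlinarith
  · haveI : IsEmpty {i : Fin n // i ∈ (∅ : Finset (Fin n))} :=
      ⟨fun j => (Finset.notMem_empty _ j.2)⟩
    haveI : IsEmpty {i : Fin n // i ∉ (∅ : Finset (Fin n))ᶜ} :=
      ⟨fun j => j.2 (Finset.mem_compl.mpr (Finset.notMem_empty _))⟩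
    rw [hF ∅, ptr_trace_sq_of_isEmpty_mem (∅ : Finset (Fin n)) P,
      ptr_trace_sq_of_isEmpty_notMem ((∅ : Finset (Fin n))ᶜ) P, hPidem, hPtr]
    rw [show ((K:ℕ):ℂ) * ((K:ℕ):ℂ) = (((K*K : ℕ)):ℂ) by push_cast; ring]
    simp only [Complex.natCast_re]
    push_cast
    field_simp
  · haveI : IsEmpty {i : Fin n // i ∉ (Finset.univ : Finset (Fin n))} :=
      ⟨fun j => j.2 (Finset.mem_univ _)⟩
    haveI : IsEmpty {i : Fin n // i ∈ (Finset.univ : Finset (Fin n))ᶜ} :=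
      ⟨fun j => (Finset.mem_compl.mp j.2) (Finset.mem_univ _)⟩
    rw [hF Finset.univ, ptr_trace_sq_of_isEmpty_notMem (Finset.univ : Finset (Fin n)) P,
      ptr_trace_sq_of_isEmpty_mem ((Finset.univ : Finset (Fin n))ᶜ) P, hPidem, hPtr]
    rw [show ((K:ℕ):ℂ) * ((K:ℕ):ℂ) = (((K*K : ℕ)):ℂ) by push_cast; ring]
    simp only [Complex.natCast_re]
    push_cast
    field_simp
    ring

end
end
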